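/- arXiv:1012.4532 — 3 statements merged into one kernel-verified Lean document; each statement's English description precedes it below -/
import Mathlib

section
/- Every ultrafilter additively isomorphic to a stable union ultrafilter is itself a stable union ultrafilter. -/
open Finset

/-- `FU t` : the set of finite unions of an infinite sequence `t` in `F`. -/
def FU (t : ℕ → Finset ℕ) : Set (Finset ℕ) :=
  {x | ∃ v : Finset ℕ, v.Nonempty ∧ x = v.biUnion t}

/-- a sequence of nonempty pairwise disjoint finite sets. -/
def IsDisjointSeq (t : ℕ → Finset ℕ) : Prop :=
  (∀ i, (t i).Nonempty) ∧ Pairwise (Function.onFun Disjoint t)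

/-- `ordLT s t` : `max s < min t`, i.e. every element of `s` is below every element of `t`. -/
def ordLT (s t : Finset ℕ) : Prop := ∀ a ∈ s, ∀ b ∈ t, a < b

/-- `t` is an almost condensation of `s`: the FU-set of some tail of `t` is inside `FU s`. -/
def AlmostCond (t s : ℕ → Finset ℕ) : Prop :=
  ∃ m, FU (fun n => t (n + m)) ⊆ FU s

/-- a union ultrafilter: an ultrafilter on `F` with a base of FU-sets of disjoint sequences. -/
def IsUnionUltrafilter (u : Ultrafilter (Finset ℕ)) : Prop :=
  ∀ A ∈ u, ∃ t, IsDisjointSeq t ∧ FU t ∈ u ∧ FU t ⊆ A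

/-- stability: countably many FU-sets in `u` admit a common almost condensation in `u`. -/
def IsStable (u : Ultrafilter (Finset ℕ)) : Prop :=
  ∀ s : ℕ → ℕ → Finset ℕ, (∀ α, IsDisjointSeq (s α)) → (∀ α, FU (s α) ∈ u) →
    ∃ t, IsDisjointSeq t ∧ FU t ∈ u ∧ ∀ α, AlmostCond t (s α)

/-- the Ramsey property for pairs: every finite partition of the ordered pairs `F²_<`
has a homogeneous set of the form `A²_<` with `A ∈ u`. -/
def RamseyPairs (u : Ultrafilter (Finset ℕ)) : Prop :=
  ∀ n : ℕ, ∀ c : Finset ℕ × Finset ℕ → Fin (n + 1),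
    ∃ A ∈ u, ∃ i, ∀ v ∈ A, ∀ w ∈ A, ordLT v w → c (v, w) = i

/-- `u` and `u'` are additively isomorphic: there are `FU s ∈ u`, `FU x ∈ u'` such that the
natural map `∪_{i∈v} s i ↦ ∪_{i∈v} x i` sends `u` to `u'`. -/
def AddIso (u u' : Ultrafilter (Finset ℕ)) : Prop :=
  ∃ s x : ℕ → Finset ℕ, IsDisjointSeq s ∧ IsDisjointSeq x ∧ FU s ∈ u ∧ FU x ∈ u' ∧
    ∃ φ : Finset ℕ → Finset ℕ,
      (∀ v : Finset ℕ, v.Nonempty → φ (v.biUnion s) = v.biUnion x) ∧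
      Ultrafilter.map φ u = u'

lemma mem_FU_self (t : ℕ → Finset ℕ) (i : ℕ) : t i ∈ FU t :=
  ⟨{i}, singleton_nonempty i, (Finset.singleton_biUnion).symm⟩

/-- FU of a deeper tail is contained in FU of a shallower tail. -/
lemma FU_shift_subset (t : ℕ → Finset ℕ) {a m : ℕ} (h : a ≤ m) :
    FU (fun n => t (n + m)) ⊆ FU (fun n => t (n + a)) := by
  rintro y ⟨v, hv, rfl⟩
  refine ⟨v.image (· + (m - a)), hv.image _, ?_⟩
  rw [Finset.image_biUnion]
  exact Finset.biUnion_congr rfl (fun i _ => by congr 1; omega)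

/-- a union ultrafilter concentrates on sets avoiding any fixed point. -/
lemma union_uf_avoid (u : Ultrafilter (Finset ℕ)) (hu : IsUnionUltrafilter u) (n : ℕ) :
    {y : Finset ℕ | n ∉ y} ∈ u := by
  have : {y : Finset ℕ | n ∈ y} ∉ u := by
    intro h
    obtain ⟨r, ⟨hne, hdisj⟩, _, hsub⟩ := hu _ h
    have h0 : n ∈ r 0 := hsub (mem_FU_self r 0)
    have h1 : n ∈ r 1 := hsub (mem_FU_self r 1)
    exact (Finset.disjoint_left.mp (hdisj (by norm_num : (0:ℕ) ≠ 1)) h0) h1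
  exact Ultrafilter.compl_mem_iff_notMem.mpr this

/-- tails of FU-sets in a union ultrafilter stay in the ultrafilter. -/
lemma FU_tail_mem (u : Ultrafilter (Finset ℕ)) (hu : IsUnionUltrafilter u)
    (t : ℕ → Finset ℕ) (ht : IsDisjointSeq t) (hFU : FU t ∈ u) (m : ℕ) :
    FU (fun n => t (n + m)) ∈ u := by
  choose a ha using ht.1
  have hmem : (FU t ∩ ⋂ i : Fin m, {y : Finset ℕ | a i ∉ y}) ∈ u := by
    refine Filter.inter_mem hFU ?_
    exact Filter.iInter_mem.mpr fun i => union_uf_avoid u hu (a i)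
  refine Filter.mem_of_superset hmem ?_
  rintro y ⟨⟨v, hv, rfl⟩, hy⟩
  have hvm : ∀ i ∈ v, m ≤ i := by
    intro i hiv
    by_contra hlt
    have : a i ∉ v.biUnion t := by
      have := Set.mem_iInter.mp hy ⟨i, by omega⟩
      exact this
    exact this (Finset.mem_biUnion.mpr ⟨i, hiv, ha i⟩)
  refine ⟨v.image (· - m), hv.image _, ?_⟩
  rw [Finset.image_biUnion]
  exact Finset.biUnion_congr rfl (fun i hi => by congr 1; have := hvm i hi; omega)

/-- decompose a sequence whose FU lies in FU s into blocks of s. -/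
lemma decompose (s t : ℕ → Finset ℕ) (hs : IsDisjointSeq s) (ht : IsDisjointSeq t)
    (hsub : ∀ i, t i ∈ FU s) :
    ∃ w : ℕ → Finset ℕ, (∀ i, (w i).Nonempty) ∧ Pairwise (Function.onFun Disjoint w) ∧
      ∀ i, t i = (w i).biUnion s := by
  choose w hw hweq using hsub
  refine ⟨w, hw, ?_, hweq⟩
  intro i k hik
  rw [Function.onFun, Finset.disjoint_left]
  intro j hji hjk
  obtain ⟨b, hb⟩ := hs.1 j
  have h1 : b ∈ t i := (hweq i) ▸ Finset.mem_biUnion.mpr ⟨j, hji, hb⟩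
  have h2 : b ∈ t k := (hweq k) ▸ Finset.mem_biUnion.mpr ⟨j, hjk, hb⟩
  exact (Finset.disjoint_left.mp (ht.2 hik) h1) h2

lemma biUnion_seq_disjoint (x : ℕ → Finset ℕ) (hx : IsDisjointSeq x)
    (w : ℕ → Finset ℕ) (hw : ∀ i, (w i).Nonempty) (hwd : Pairwise (Function.onFun Disjoint w)) :
    IsDisjointSeq (fun i => (w i).biUnion x) := by
  constructor
  · intro i
    obtain ⟨j, hj⟩ := hw i
    exact Finset.biUnion_nonempty.mpr ⟨j, hj, hx.1 j⟩
  · intro i k hik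
    rw [Function.onFun]
    rw [Finset.disjoint_biUnion_left]
    intro j hj
    rw [Finset.disjoint_biUnion_right]
    intro j' hj'
    refine hx.2 ?_
    intro hjj'
    subst hjj'
    exact (Finset.disjoint_left.mp (hwd hik) hj) hj'

lemma push_biUnion (s x : ℕ → Finset ℕ) (φ : Finset ℕ → Finset ℕ)
    (hφ : ∀ v : Finset ℕ, v.Nonempty → φ (v.biUnion s) = v.biUnion x)
    (w : ℕ → Finset ℕ) (hw : ∀ i, (w i).Nonempty)
    (t : ℕ → Finset ℕ) (hweq : ∀ i, t i = (w i).biUnion s)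
    (v : Finset ℕ) (hv : v.Nonempty) :
    φ (v.biUnion t) = v.biUnion (fun i => (w i).biUnion x) := by
  have h1 : v.biUnion t = (v.biUnion w).biUnion s := by
    rw [Finset.biUnion_biUnion]
    exact Finset.biUnion_congr rfl (fun i _ => hweq i)
  obtain ⟨i0, hi0⟩ := hv
  have hne : (v.biUnion w).Nonempty := Finset.biUnion_nonempty.mpr ⟨i0, hi0, hw i0⟩
  rw [h1, hφ _ hne, Finset.biUnion_biUnion]

/-- Every additively isomorphic image of a stable union ultrafilter is a
stable union ultrafilter. -/
theorem addIso_stable_union (u u' : Ultrafilter (Finset ℕ))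
    (hu : IsUnionUltrafilter u) (hst : IsStable u) (hiso : AddIso u u') :
    IsUnionUltrafilter u' ∧ IsStable u' := by
  obtain ⟨s, x, hs, hx, hsu, hxu', φ, hφ, hmap⟩ := hiso
  -- membership transfer
  have hmem' : ∀ A : Set (Finset ℕ), A ∈ u' ↔ φ ⁻¹' A ∈ u := by
    intro A; rw [← hmap, Ultrafilter.mem_map]
  constructor
  · -- union ultrafilter
    intro A hA
    have hB : (φ ⁻¹' A ∩ FU s) ∈ u := Filter.inter_mem ((hmem' A).mp hA) hsu
    obtain ⟨t, ht, htu, htsub⟩ := hu _ hB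
    have htFUs : ∀ i, t i ∈ FU s := fun i => (htsub (mem_FU_self t i)).2
    obtain ⟨w, hw, hwd, hweq⟩ := decompose s t hs ht htFUs
    refine ⟨fun i => (w i).biUnion x, biUnion_seq_disjoint x hx w hw hwd, ?_, ?_⟩
    · rw [hmem']
      refine Filter.mem_of_superset htu ?_
      rintro y ⟨v, hv, rfl⟩
      exact ⟨v, hv, push_biUnion s x φ hφ w hw t hweq v hv⟩
    · rintro y ⟨v, hv, rfl⟩
      rw [← push_biUnion s x φ hφ w hw t hweq v hv]
      exact (htsub ⟨v, hv, rfl⟩).1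
  · -- stability
    intro s' hds' hmem''
    have hBα : ∀ α, (φ ⁻¹' FU (s' α) ∩ FU s) ∈ u := fun α =>
      Filter.inter_mem ((hmem' _).mp (hmem'' α)) hsu
    choose σ hσd hσu hσsub using fun α => hu _ (hBα α)
    set r : ℕ → ℕ → Finset ℕ := fun α => Nat.rec s (fun β _ => σ β) α with hr
    have hrd : ∀ α, IsDisjointSeq (r α) := by
      intro α; cases α with
      | zero => exact hs
      | succ β => exact hσd β
    have hru : ∀ α, FU (r α) ∈ u := by
      intro α; cases α with
      | zero => exact hsu
      | succ β => exact hσu β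
    obtain ⟨t, ht, htu, hac⟩ := hst r hrd hru
    obtain ⟨m₀, hm₀⟩ := hac 0
    set T : ℕ → Finset ℕ := fun n => t (n + m₀) with hT
    have hTd : IsDisjointSeq T := by
      refine ⟨fun i => ht.1 _, fun i k hik => ht.2 (by omega)⟩
    have hTu : FU T ∈ u := FU_tail_mem u hu t ht htu m₀
    have hTs : ∀ i, T i ∈ FU s := fun i => hm₀ (mem_FU_self T i)
    obtain ⟨w, hw, hwd, hweq⟩ := decompose s T hs hTd hTs
    refine ⟨fun i => (w i).biUnion x, biUnion_seq_disjoint x hx w hw hwd, ?_, ?_⟩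
    · rw [hmem']
      refine Filter.mem_of_superset hTu ?_
      rintro y ⟨v, hv, rfl⟩
      exact ⟨v, hv, push_biUnion s x φ hφ w hw T hweq v hv⟩
    · intro α
      obtain ⟨m, hm⟩ := hac (α + 1)
      refine ⟨m, ?_⟩
      rintro y ⟨v, hv, rfl⟩
      -- the preimage element
      set z : Finset ℕ := v.biUnion (fun n => T (n + m)) with hz
      have hz1 : z ∈ FU (fun n => t (n + m)) := by
        refine ⟨v.image (· + m₀), hv.image _, ?_⟩
        rw [Finset.image_biUnion]
        exact Finset.biUnion_congr rfl (fun i _ => by simp only [hT]; congr 1; omega)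
      have hz2 : z ∈ φ ⁻¹' FU (s' α) := (hσsub α (hm hz1)).1
      have hz3 : φ z = v.biUnion (fun n => (w (n + m)).biUnion x) := by
        exact push_biUnion s x φ hφ (fun n => w (n + m)) (fun n => hw _)
          (fun n => T (n + m)) (fun n => hweq _) v hv
      rw [← hz3]
      exact hz2
end

section
/- The set H := {p ∈ FU^∞(s) ∩ δF : every A ∈ p is s-meshed} is a closed subsemigroup of δF: it is nonempty, closed, and p·q ∈ H for p,q ∈ H. -/
open Finset

/-- two sets mesh if neither lies entirely below the other. -/
def Mesh (s t : Finset ℕ) : Prop := ¬ ordLT s t ∧ ¬ ordLT t s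

/-- finite unions of a finite sequence. -/
def FUfin {n : ℕ} (t : Fin n → Finset ℕ) : Set (Finset ℕ) :=
  {x | ∃ v : Finset (Fin n), v.Nonempty ∧ x = v.biUnion t}

/-- the meshing graph of `t` w.r.t. `s` is complete: any two distinct members of `t`
contain members of `s` which mesh. -/
def CompleteMesh (s : ℕ → Finset ℕ) {n : ℕ} (t : Fin n → Finset ℕ) : Prop :=
  ∀ i j : Fin n, i ≠ j → ∃ m k, s m ⊆ t i ∧ s k ⊆ t j ∧ Mesh (s m) (s k)

/-- `A` is `s`-meshed: for every `n` there is an `n`-witness, i.e. a disjoint sequence of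
length `n` whose FU-set lies in `FU s ∩ A` and whose meshing graph is complete. -/
def SMeshed (s : ℕ → Finset ℕ) (A : Set (Finset ℕ)) : Prop :=
  ∀ n : ℕ, ∃ t : Fin n → Finset ℕ, (∀ i, (t i).Nonempty) ∧
    Pairwise (Function.onFun Disjoint t) ∧ FUfin t ⊆ FU s ∩ A ∧ CompleteMesh s t

/-- the product of ultrafilters on `F` extending (disjoint) union:
`A ∈ p·q ↔ {v : {w : v ∪ w ∈ A} ∈ q} ∈ p`. -/
def uMul (p q : Ultrafilter (Finset ℕ)) : Ultrafilter (Finset ℕ) :=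
  p.bind fun v => q.map fun w => v ∪ w

/-- `δF` : ultrafilters concentrating on nonempty sets and containing every
`σ(v) = {w : v ∩ w = ∅}`. -/
def deltaF : Set (Ultrafilter (Finset ℕ)) :=
  {p | {w : Finset ℕ | w.Nonempty} ∈ p ∧ ∀ v : Finset ℕ, {w | Disjoint v w} ∈ p}

/-- `H = {p ∈ FU^∞(s) ∩ δF : every member of p is s-meshed}`. -/
def Hset (s : ℕ → Finset ℕ) : Set (Ultrafilter (Finset ℕ)) :=
  {p | p ∈ deltaF ∧ (∀ k, FU (fun n => s (n + k)) ∈ p) ∧ ∀ A ∈ p, SMeshed s A}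

/-! The heart of the matter is that `s`-meshedness is partition regular. Given witnesses `t N` for
`A ∪ B` of every length `N`, colour a finite index set `x` by whether `⋃_{i ∈ x} t N i ∈ A` for
most `N` along a nonprincipal ultrafilter; the finite unions theorem gives a disjoint sequence of
index sets with monochromatic finite unions, and amalgamating `t N` along it yields witnesses of
any length for `A` or for `B`. Hence the sets with non-`s`-meshed complement form a proper filter,
and any ultrafilter refining it lies in `H`, because the complements of `σ(v)` and of `FU_k(s)`
contain no `#v + 1`, resp. `k + 1`, disjoint nonempty members of `FU(s)`. -/

namespace Hindman

theorem exists_sum_eq_of_mem_FS {M : Type*} [AddCommMonoid M] {a : Stream' M} {m : M}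
    (hm : m ∈ FS a) : ∃ S : Finset ℕ, S.Nonempty ∧ m = ∑ i ∈ S, a.get i := by
  induction hm with
  | head' a => exact ⟨{0}, singleton_nonempty 0, by simp [Stream'.head]⟩
  | tail' a m _ ih =>
    obtain ⟨S, hS, rfl⟩ := ih
    exact ⟨S.map ⟨_, Nat.succ_injective⟩, hS.map, by simp [Stream'.get_tail]⟩
  | cons' a m _ ih =>
    obtain ⟨S, -, rfl⟩ := ih
    refine ⟨insert 0 (S.map ⟨_, Nat.succ_injective⟩), insert_nonempty _ _, ?_⟩
    rw [sum_insert (by simp)]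
    simp [Stream'.head, Stream'.get_tail]

end Hindman

open Hindman in
/-- The finite unions theorem (Folkman–Rado–Sanders), in its two-colour form. -/
theorem exists_isDisjointSeq_FU_subset_or_subset_compl (C : Set (Finset ℕ)) :
    ∃ V, IsDisjointSeq V ∧ (FU V ⊆ C ∨ FU V ⊆ Cᶜ) := by
  classical
  -- Finite sums of distinct singletons in `Multiset ℕ` are the nonempty finite sets, with no
  -- carries: so Hindman's theorem there yields finite unions of disjoint sets.
  set a : Stream' (Multiset ℕ) := fun i => {i}
  have hFSa : ∀ m ∈ FS a, m.Nodup ∧ m ≠ 0 := fun m hm => by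
    obtain ⟨S, hS, rfl⟩ := exists_sum_eq_of_mem_FS hm
    have hsum : ∑ i ∈ S, a.get i = S.val := sum_multiset_singleton S
    exact hsum ▸ ⟨S.nodup, by simpa using hS.ne_empty⟩
  obtain ⟨c, hc, b, hb⟩ := FS_partition_regular a
    {{m ∈ FS a | m.toFinset ∈ C}, {m ∈ FS a | m.toFinset ∉ C}} (by simp)
    (fun m hm => by by_cases h : m.toFinset ∈ C <;> simp [hm, h])
  have hbc : FS b ⊆ FS a := hb.trans (by rcases hc with rfl | rfl <;> exact Set.sep_subset _ _)
  have hFU : ∀ x ∈ FU fun i => (b.get i).toFinset, ∃ m ∈ FS b, m.toFinset = x := by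
    rintro x ⟨W, hW, rfl⟩
    exact ⟨_, FS.finsetSum b W hW, by ext; simp [Multiset.mem_sum]⟩
  refine ⟨fun i => (b.get i).toFinset, ⟨fun i => ?_, fun i j hij => ?_⟩, ?_⟩
  · exact Multiset.toFinset_nonempty.2 (hFSa _ (hbc (FS.singleton b i))).2
  · have hmem := FS.finsetSum b {i, j} (insert_nonempty _ _)
    rw [sum_pair hij] at hmem
    exact Multiset.disjoint_toFinset.2 (Multiset.nodup_add.1 (hFSa _ (hbc hmem)).1).2.2
  · rcases hc with rfl | rfl
    · exact .inl fun x hx => by obtain ⟨m, hm, rfl⟩ := hFU x hx; exact (hb hm).2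
    · exact .inr fun x hx => by obtain ⟨m, hm, rfl⟩ := hFU x hx; exact (hb hm).2

section Meshed

variable {s : ℕ → Finset ℕ} {A B D E : Set (Finset ℕ)} {n N : ℕ}

def IsMeshWitness (s : ℕ → Finset ℕ) (A : Set (Finset ℕ)) (t : Fin n → Finset ℕ) : Prop :=
  (∀ i, (t i).Nonempty) ∧ Pairwise (Function.onFun Disjoint t) ∧ FUfin t ⊆ FU s ∩ A ∧
    CompleteMesh s t

theorem smeshed_iff : SMeshed s A ↔ ∀ n, ∃ t : Fin n → Finset ℕ, IsMeshWitness s A t :=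
  Iff.rfl

theorem single_mem_FUfin (t : Fin n → Finset ℕ) (i : Fin n) : t i ∈ FUfin t :=
  ⟨{i}, singleton_nonempty i, singleton_biUnion.symm⟩

theorem IsMeshWitness.of_FUfin_subset {t : Fin n → Finset ℕ} (ht : IsMeshWitness s E t)
    (hD : FUfin t ⊆ D) : IsMeshWitness s D t :=
  ⟨ht.1, ht.2.1, fun _ hx => ⟨(ht.2.2.1 hx).1, hD hx⟩, ht.2.2.2⟩

theorem IsMeshWitness.mono {t : Fin n → Finset ℕ} (ht : IsMeshWitness s A t) (hAB : A ⊆ B) :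
    IsMeshWitness s B t :=
  ht.of_FUfin_subset fun _ hx => hAB (ht.2.2.1 hx).2

theorem SMeshed.mono (h : SMeshed s A) (hAB : A ⊆ B) : SMeshed s B := fun n =>
  (smeshed_iff.1 h n).imp fun _ ht => ht.mono hAB

theorem FUfin_biUnion_subset {t : Fin N → Finset ℕ} {V : Fin n → Finset (Fin N)}
    (hV : ∀ k, (V k).Nonempty) : FUfin (fun k => (V k).biUnion t) ⊆ FUfin t := by
  rintro x ⟨W, hW, rfl⟩
  exact ⟨W.biUnion V, hW.biUnion fun k _ => hV k, (biUnion_biUnion W V t).symm⟩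

theorem IsMeshWitness.biUnion {t : Fin N → Finset ℕ} (ht : IsMeshWitness s E t)
    {V : Fin n → Finset (Fin N)} (hV : ∀ k, (V k).Nonempty)
    (hVdisj : Pairwise (Function.onFun Disjoint V)) :
    IsMeshWitness s E fun k => (V k).biUnion t := by
  obtain ⟨hne, hdisj, hFU, hmesh⟩ := ht
  have hidx_ne : ∀ {k l i j}, k ≠ l → i ∈ V k → j ∈ V l → i ≠ j := fun hkl hi hj hij =>
    disjoint_left.1 (hVdisj hkl) hi (hij ▸ hj)
  refine ⟨fun k => (hV k).biUnion fun i _ => hne i, fun k l hkl => ?_,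
    (FUfin_biUnion_subset hV).trans hFU, fun k l hkl => ?_⟩
  · simp only [Function.onFun, disjoint_biUnion_left, disjoint_biUnion_right]
    exact fun j hj i hi => hdisj (hidx_ne hkl hi hj)
  · obtain ⟨i, hi⟩ := hV k
    obtain ⟨j, hj⟩ := hV l
    obtain ⟨m, m', hm, hm', hmesh⟩ := hmesh i j (hidx_ne hkl hi hj)
    exact ⟨m, m', hm.trans (subset_biUnion_of_mem t hi), hm'.trans (subset_biUnion_of_mem t hj),
      hmesh⟩

noncomputable def finPreimage (N : ℕ) (x : Finset ℕ) : Finset (Fin N) :=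
  x.preimage Fin.val Fin.val_injective.injOn

@[simp]
theorem mem_finPreimage {x : Finset ℕ} {i : Fin N} : i ∈ finPreimage N x ↔ (i : ℕ) ∈ x :=
  mem_preimage

theorem smeshed_inter_of_eventually_mem {t : ∀ N, Fin N → Finset ℕ} (ht : ∀ N, IsMeshWitness s E (t N))
    {U : Ultrafilter ℕ} (hU : (U : Filter ℕ) ≤ Filter.atTop) {V : ℕ → Finset ℕ}
    (hV : IsDisjointSeq V)
    (hVD : ∀ x ∈ FU V, ∀ᶠ N in U, (finPreimage N x).biUnion (t N) ∈ D) :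
    SMeshed s (E ∩ D) := by
  intro n
  set V' : ∀ N : ℕ, Fin n → Finset (Fin N) := fun N k => finPreimage N (V k)
  have hgood : ∀ᶠ N in U, (∀ k, (V' N k).Nonempty) ∧
      ∀ W : Finset (Fin n), W.Nonempty → (W.biUnion (V' N)).biUnion (t N) ∈ D := by
    refine (Filter.eventually_all.2 fun k => ?_).and (Filter.eventually_all.2 fun W => ?_)
    · obtain ⟨j, hj⟩ := hV.1 k
      filter_upwards [hU (Filter.eventually_gt_atTop j)] with N hN
      exact ⟨⟨j, hN⟩, mem_finPreimage.2 hj⟩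
    · by_cases hW : W.Nonempty
      · have hx : (W.map Fin.valEmbedding).biUnion V ∈ FU V := ⟨_, hW.map, rfl⟩
        filter_upwards [hVD _ hx] with N hN _
        convert hN using 2
        ext i
        simp [V']
      · exact Filter.Eventually.of_forall fun N h => absurd h hW
  obtain ⟨N, hne, hD⟩ := hgood.exists
  refine ⟨_, ((ht N).biUnion hne fun k l hkl => ?_).of_FUfin_subset ?_⟩
  · simp only [Function.onFun, V', disjoint_left, mem_finPreimage]
    exact fun _ hi => disjoint_left.1 (hV.2 (Fin.val_injective.ne hkl)) hi
  · rintro x ⟨W, hW, rfl⟩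
    refine ⟨((ht N).2.2.1 (FUfin_biUnion_subset hne ⟨W, hW, rfl⟩)).2, ?_⟩
    rw [← biUnion_biUnion]
    exact hD W hW

theorem SMeshed.or_of_union (h : SMeshed s (A ∪ B)) : SMeshed s A ∨ SMeshed s B := by
  choose t ht using h
  set U := Filter.hyperfilter ℕ
  have hU : (U : Filter ℕ) ≤ Filter.atTop := Nat.cofinite_eq_atTop ▸ Filter.hyperfilter_le_cofinite
  obtain ⟨V, hV, hA | hA⟩ := exists_isDisjointSeq_FU_subset_or_subset_compl
    {x | ∀ᶠ N in U, (finPreimage N x).biUnion (t N) ∈ A}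
  · exact .inl ((smeshed_inter_of_eventually_mem ht hU hV hA).mono Set.inter_subset_right)
  · refine .inr ((smeshed_inter_of_eventually_mem (D := Aᶜ) ht hU hV fun x hx => ?_).mono ?_)
    · exact Ultrafilter.eventually_not.2 (hA hx)
    · rintro x ⟨hx | hx, hxA⟩
      exacts [absurd hx hxA, hx]

end Meshed

section Basic

variable {s : ℕ → Finset ℕ} {A : Set (Finset ℕ)}

theorem SMeshed.inter_FU (h : SMeshed s A) : SMeshed s (FU s ∩ A) := fun n =>
  (smeshed_iff.1 h n).imp fun _ ht => ht.of_FUfin_subset ht.2.2.1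

theorem SMeshed.exists_nonempty_mem (h : SMeshed s A) : ∃ x ∈ A, x.Nonempty := by
  obtain ⟨t, hne, -, hFU, -⟩ := h 1
  exact ⟨t 0, (hFU (single_mem_FUfin t 0)).2, hne 0⟩

theorem not_smeshed_empty : ¬SMeshed s ∅ := fun h => by
  obtain ⟨_, hx, -⟩ := h.exists_nonempty_mem
  exact hx

theorem not_smeshed_compl_nonempty : ¬SMeshed s {w | w.Nonempty}ᶜ := fun h => by
  obtain ⟨_, hx, hne⟩ := h.exists_nonempty_mem
  exact hx hne

/-- `#v + 1` disjoint sets cannot all meet `v`. -/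
theorem not_smeshed_compl_disjoint (v : Finset ℕ) : ¬SMeshed s {w | Disjoint v w}ᶜ := fun h => by
  obtain ⟨t, -, hdisj, hFU, -⟩ := h (#v + 1)
  choose f hfv hft using fun i => not_disjoint_iff.1 (hFU (single_mem_FUfin t i)).2
  have hinj : Set.InjOn f (univ : Finset (Fin (#v + 1))) := fun i _ j _ hij => by
    by_contra hne
    exact disjoint_left.1 (hdisj hne) (hft i) (hij ▸ hft j)
  simpa using card_le_card_of_injOn f (fun i _ => hfv i) hinj

theorem biUnion_mem_FU_add {X : Finset ℕ} (hX : X.Nonempty) {k : ℕ} (hk : ∀ j ∈ X, k ≤ j) :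
    X.biUnion s ∈ FU fun n => s (n + k) := by
  refine ⟨X.image (· - k), hX.image _, ?_⟩
  rw [image_biUnion]
  exact biUnion_congr rfl fun j hj => by rw [Nat.sub_add_cancel (hk j hj)]

/-- A finite union of `s` that is not one of `(s (n + k))ₙ` meets `⋃_{j < k} s j`. -/
theorem not_smeshed_compl_FU_add (hs : ∀ i, (s i).Nonempty) (k : ℕ) :
    ¬SMeshed s (FU fun n => s (n + k))ᶜ := fun h => by
  refine not_smeshed_compl_disjoint ((range k).biUnion s) (h.inter_FU.mono ?_)
  rintro _ ⟨⟨X, hX, rfl⟩, hnot⟩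
  obtain ⟨j, hjX, hjk⟩ : ∃ j ∈ X, j < k := by
    by_contra! hk
    exact hnot (biUnion_mem_FU_add hX hk)
  obtain ⟨a, ha⟩ := hs j
  exact not_disjoint_iff.2 ⟨a, mem_biUnion.2 ⟨j, mem_range.2 hjk, ha⟩,
    mem_biUnion.2 ⟨j, hjX, ha⟩⟩

theorem smeshed_univ (hs : IsDisjointSeq s)
    (harb : ∀ n, ∃ i : Fin n → ℕ, Function.Injective i ∧ CompleteMesh s fun k => s (i k)) :
    SMeshed s Set.univ := fun n => by
  obtain ⟨i, hinj, hmesh⟩ := harb n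
  refine ⟨fun k => s (i k), fun k => hs.1 _, fun k l hkl => hs.2 (hinj.ne hkl), ?_, hmesh⟩
  rintro _ ⟨W, hW, rfl⟩
  exact ⟨⟨W.image i, hW.image i, image_biUnion.symm⟩, trivial⟩

end Basic

theorem Ultrafilter.exists_forall_mem_of_partitionRegular {α : Type*} {P : Set α → Prop}
    (hempty : ¬P ∅) (hmono : Monotone P) (hunion : ∀ A B, P (A ∪ B) → P A ∨ P B)
    (huniv : P Set.univ) : ∃ p : Ultrafilter α, ∀ A ∈ p, P A := by
  let g : Filter α := .comk (¬P ·) hempty (fun _ ht _ hst hs => ht (hmono hst hs))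
    fun A hA B hB h => (hunion A B h).elim hA hB
  have : g.NeBot := Filter.neBot_iff.2 fun h =>
    (Filter.empty_mem_iff_bot.2 h : ¬P ∅ᶜ) (Set.compl_empty ▸ huniv)
  refine ⟨.of g, fun A hA => by_contra fun h => ?_⟩
  have hAc : Aᶜ ∈ g := Filter.mem_comk.2 (by rwa [compl_compl])
  exact Ultrafilter.compl_mem_iff_notMem.1 (Ultrafilter.of_le g hAc) hA

theorem Ultrafilter.isClosed_setOf_forall_mem {α : Type*} (P : Set α → Prop) :
    IsClosed {p : Ultrafilter α | ∀ A ∈ p, P A} := by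
  rw [Set.ofPred_forall]
  refine isClosed_iInter fun A => ?_
  by_cases h : P A
  · simp [h]
  · simp only [h, imp_false]
    exact (ultrafilter_isOpen_basic A).isClosed_compl

theorem isClosed_deltaF : IsClosed deltaF := by
  simp only [deltaF, Set.ofPred_and, Set.ofPred_forall]
  exact (ultrafilter_isClosed_basic _).inter (isClosed_iInter fun _ => ultrafilter_isClosed_basic _)

theorem isClosed_Hset (s : ℕ → Finset ℕ) : IsClosed (Hset s) := by
  have : Hset s = deltaF ∩ ((⋂ k, {p | FU (fun n => s (n + k)) ∈ p}) ∩
      {p | ∀ A ∈ p, SMeshed s A}) := by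
    ext; simp only [Hset, Set.mem_ofPred_eq, Set.mem_inter_iff, Set.mem_iInter]
  rw [this]
  exact isClosed_deltaF.inter ((isClosed_iInter fun _ => ultrafilter_isClosed_basic _).inter
    (Ultrafilter.isClosed_setOf_forall_mem _))

section Product

variable {s : ℕ → Finset ℕ} {p q : Ultrafilter (Finset ℕ)} {A : Set (Finset ℕ)}

theorem mem_uMul : A ∈ uMul p q ↔ {v | {w | v ∪ w ∈ A} ∈ q} ∈ p := Iff.rfl

theorem uMul_mem_of {X Y : Set (Finset ℕ)} (hX : X ∈ p) (hY : Y ∈ q)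
    (h : ∀ v ∈ X, ∀ w ∈ Y, v ∪ w ∈ A) : A ∈ uMul p q :=
  mem_uMul.2 <| Filter.mem_of_superset hX fun v hv => Filter.mem_of_superset hY (h v hv)

theorem uMul_mem_deltaF (hp : p ∈ deltaF) (hq : q ∈ deltaF) : uMul p q ∈ deltaF :=
  ⟨uMul_mem_of hp.1 hq.1 fun _ _ _ hw => hw.mono subset_union_right,
    fun v => uMul_mem_of (hp.2 v) (hq.2 v) fun _ hu _ hw => disjoint_union_right.2 ⟨hu, hw⟩⟩

theorem FU_union {t : ℕ → Finset ℕ} {x y : Finset ℕ} (hx : x ∈ FU t) (hy : y ∈ FU t) :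
    x ∪ y ∈ FU t := by
  obtain ⟨v, hv, rfl⟩ := hx
  obtain ⟨w, hw, rfl⟩ := hy
  exact ⟨v ∪ w, hv.mono subset_union_left, union_biUnion.symm⟩

theorem IsMeshWitness.union {n : ℕ} {B C : Set (Finset ℕ)} {t u : Fin n → Finset ℕ}
    (ht : IsMeshWitness s B t) (hu : IsMeshWitness s C u) (htu : ∀ i j, Disjoint (t i) (u j))
    (hA : ∀ W : Finset (Fin n), W.Nonempty → W.biUnion t ∪ W.biUnion u ∈ A) :
    IsMeshWitness s A fun i => t i ∪ u i := by
  obtain ⟨hne, hdisj, hFU, hmesh⟩ := ht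
  refine ⟨fun i => (hne i).mono subset_union_left, fun i j hij => ?_, ?_, fun i j hij => ?_⟩
  · exact disjoint_union_left.2 ⟨disjoint_union_right.2 ⟨hdisj hij, htu i j⟩,
      disjoint_union_right.2 ⟨(htu j i).symm, hu.2.1 hij⟩⟩
  · rintro _ ⟨W, hW, rfl⟩
    rw [biUnion_union]
    exact ⟨FU_union (hFU ⟨W, hW, rfl⟩).1 (hu.2.2.1 ⟨W, hW, rfl⟩).1, hA W hW⟩
  · obtain ⟨m, k, hm, hk, hmk⟩ := hmesh i j hij
    exact ⟨m, k, hm.trans subset_union_left, hk.trans subset_union_left, hmk⟩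

/-- A witness `t` for `{v | {w | v ∪ w ∈ A} ∈ q}` leaves a member `D` of `q` of sets `w` disjoint
from all `t i` with `⋃_{i ∈ W} t i ∪ w ∈ A` for all `W`; a witness `u` for `D` merges with `t`
into the witness `t ∪ u` for `A`. -/
theorem smeshed_of_mem_uMul (hp : ∀ B ∈ p, SMeshed s B) (hqF : q ∈ deltaF)
    (hq : ∀ B ∈ q, SMeshed s B) (hA : A ∈ uMul p q) : SMeshed s A := by
  intro n
  obtain ⟨t, ht⟩ := smeshed_iff.1 (hp _ (mem_uMul.1 hA)) n
  set D := {w | (∀ W : Finset (Fin n), W.Nonempty → W.biUnion t ∪ w ∈ A) ∧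
    Disjoint (univ.biUnion t) w}
  have hD : D ∈ q := by
    refine Filter.inter_mem (Filter.eventually_all.2 fun W => ?_) (hqF.2 _)
    by_cases hW : W.Nonempty
    · exact Filter.mem_of_superset (ht.2.2.1 ⟨W, hW, rfl⟩).2 fun w hw _ => hw
    · exact Filter.univ_mem' fun _ h => absurd h hW
  obtain ⟨u, hu⟩ := smeshed_iff.1 (hq D hD) n
  refine ⟨_, ht.union hu (fun i j => ?_) fun W hW => (hu.2.2.1 ⟨W, hW, rfl⟩).2.1 W hW⟩
  exact (hu.2.2.1 (single_mem_FUfin u j)).2.2.mono_left (subset_biUnion_of_mem t (mem_univ i))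

theorem uMul_mem_Hset (hp : p ∈ Hset s) (hq : q ∈ Hset s) : uMul p q ∈ Hset s :=
  ⟨uMul_mem_deltaF hp.1 hq.1,
    fun k => uMul_mem_of (hp.2.1 k) (hq.2.1 k) fun _ hv _ hw => FU_union hv hw,
    fun _ hA => smeshed_of_mem_uMul hp.2.2 hq.1 hq.2.2 hA⟩

end Product

/-- The meshing semigroup: if `s` has arbitrarily large completely meshed finite
subsequences, then `H` is a nonempty closed subsemigroup of `δF`. -/
theorem Hset_closed_subsemigroup (s : ℕ → Finset ℕ) (hs : IsDisjointSeq s)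
    (harb : ∀ n : ℕ, ∃ i : Fin n → ℕ, StrictMono i ∧ CompleteMesh s (fun k => s (i k))) :
    (Hset s).Nonempty ∧ IsClosed (Hset s) ∧
      ∀ p ∈ Hset s, ∀ q ∈ Hset s, uMul p q ∈ Hset s := by
  refine ⟨?_, isClosed_Hset s, fun p hp q hq => uMul_mem_Hset hp hq⟩
  have huniv : SMeshed s Set.univ :=
    smeshed_univ hs fun n => (harb n).imp fun _ hi => ⟨hi.1.injective, hi.2⟩
  obtain ⟨p, hp⟩ := Ultrafilter.exists_forall_mem_of_partitionRegular not_smeshed_empty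
    (fun _ _ hAB hA => SMeshed.mono hA hAB) (fun _ _ => SMeshed.or_of_union) huniv
  have hmem : ∀ A, ¬SMeshed s Aᶜ → A ∈ p := fun A hA =>
    by_contra fun h => hA (hp _ (Ultrafilter.compl_mem_iff_notMem.2 h))
  exact ⟨p, ⟨hmem _ not_smeshed_compl_nonempty, fun v => hmem _ (not_smeshed_compl_disjoint v)⟩,
    fun k => hmem _ (not_smeshed_compl_FU_add hs.1 k), hp⟩
end

section
/- A union ultrafilter u which is stable via min has the Ramsey property for pairs (hence is stable), assuming: min(u) is a P-point, and min(u), max(u) are not nearly coherent. -/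
open Finset

/-- the minimum of a finite set of naturals (0 for the empty set). -/
noncomputable def fmin (v : Finset ℕ) : ℕ := sInf (↑v : Set ℕ)

/-- the maximum of a finite set of naturals (0 for the empty set). -/
noncomputable def fmax (v : Finset ℕ) : ℕ := sSup (↑v : Set ℕ)

/-- a finite-to-one map on ω. -/
def FinToOne (f : ℕ → ℕ) : Prop := ∀ n, (f ⁻¹' {n}).Finite

/-- a P-point: every map is constant or finite-to-one on a set in the ultrafilter. -/
def IsPPoint (p : Ultrafilter ℕ) : Prop :=
  ∀ f : ℕ → ℕ, ∃ A ∈ p, (∀ a ∈ A, ∀ b ∈ A, f a = f b) ∨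
    ∀ n, {a | a ∈ A ∧ f a = n}.Finite

/-- two ultrafilters on ω are nearly coherent if finite-to-one maps send them to the
same ultrafilter. -/
def NearlyCoherent (p q : Ultrafilter ℕ) : Prop :=
  ∃ f g : ℕ → ℕ, FinToOne f ∧ FinToOne g ∧ Ultrafilter.map f p = Ultrafilter.map g q

/-- `u` is stable via min: if `f(v) < g(min v)` on a set in `u`, then `f` depends
only on `min` on a set in `u`. -/
def StableViaMin (u : Ultrafilter (Finset ℕ)) : Prop :=
  ∀ f : Finset ℕ → ℕ, ∀ g : ℕ → ℕ, (∃ A ∈ u, ∀ v ∈ A, f v < g (fmin v)) →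
    ∃ h : ℕ → ℕ, {v : Finset ℕ | f v = h (fmin v)} ∈ u

section Aux

open Finset

variable {u : Ultrafilter (Finset ℕ)}

lemma fmin_mem {v : Finset ℕ} (h : v.Nonempty) : fmin v ∈ v := by
  have := Nat.sInf_mem (s := (↑v : Set ℕ)) (by exact_mod_cast h)
  exact_mod_cast this

lemma fmax_mem {v : Finset ℕ} (h : v.Nonempty) : fmax v ∈ v := by
  have := Nat.sSup_mem (s := (↑v : Set ℕ)) (by exact_mod_cast h) v.finite_toSet.bddAbove
  exact_mod_cast this

lemma fmin_le {v : Finset ℕ} {a : ℕ} (ha : a ∈ v) : fmin v ≤ a :=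
  Nat.sInf_le (by exact_mod_cast ha)

lemma le_fmax {v : Finset ℕ} {a : ℕ} (ha : a ∈ v) : a ≤ fmax v :=
  le_csSup v.finite_toSet.bddAbove (by exact_mod_cast ha)

lemma FU_nonempty {t : ℕ → Finset ℕ} (ht : IsDisjointSeq t) {x : Finset ℕ}
    (hx : x ∈ FU t) : x.Nonempty := by
  obtain ⟨v, hv, rfl⟩ := hx
  obtain ⟨n, hn⟩ := hv
  obtain ⟨a, ha⟩ := ht.1 n
  exact ⟨a, Finset.mem_biUnion.mpr ⟨n, hn, ha⟩⟩

lemma uf_nonempty_mem (hu : IsUnionUltrafilter u) : {x : Finset ℕ | x.Nonempty} ∈ u := by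
  obtain ⟨t, ht, htu, -⟩ := hu Set.univ Filter.univ_mem
  exact Filter.mem_of_superset htu (fun x hx => FU_nonempty ht hx)

lemma uf_notMem_mem (hu : IsUnionUltrafilter u) (a : ℕ) : {x : Finset ℕ | a ∉ x} ∈ u := by
  by_contra hcon
  have h1 : {x : Finset ℕ | a ∈ x} ∈ u := by
    have : ({x : Finset ℕ | a ∈ x} : Set (Finset ℕ))ᶜ ∉ u := hcon
    exact Ultrafilter.compl_notMem_iff.mp this
  obtain ⟨t, ht, htu, hsub⟩ := hu _ h1
  have h0 : t 0 ∈ FU t := ⟨{0}, Finset.singleton_nonempty 0, (Finset.singleton_biUnion).symm⟩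
  have h1' : t 1 ∈ FU t := ⟨{1}, Finset.singleton_nonempty 1, (Finset.singleton_biUnion).symm⟩
  have hd : Disjoint (t 0) (t 1) := ht.2 (by decide : (0:ℕ) ≠ 1)
  exact (Finset.disjoint_left.mp hd (hsub h0)) (hsub h1')

lemma uf_fmin_gt_mem (hu : IsUnionUltrafilter u) (m : ℕ) : {x : Finset ℕ | m < fmin x} ∈ u := by
  have h1 : ({x : Finset ℕ | x.Nonempty} ∩ ⋂ a ∈ Set.Iic m, {x : Finset ℕ | a ∉ x}) ∈ u :=
    Filter.inter_mem (uf_nonempty_mem hu)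
      ((Filter.biInter_mem (Set.finite_Iic m)).mpr (fun a _ => uf_notMem_mem hu a))
  refine Filter.mem_of_superset h1 ?_
  rintro x ⟨hne, hx⟩
  simp only [Set.mem_setOf_eq]
  by_contra hcon
  push_neg at hcon
  have hmem : fmin x ∈ x := fmin_mem hne
  exact (Set.mem_iInter₂.mp hx (fmin x) (Set.mem_Iic.mpr hcon)) hmem

lemma findGreatest_spec0 {Q : ℕ → Prop} [DecidablePred Q] (h0 : Q 0) (n : ℕ) :
    Q (Nat.findGreatest Q n) := by
  induction n with
  | zero => simpa [Nat.findGreatest_zero] using h0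
  | succ k ih =>
    rw [Nat.findGreatest_succ]
    by_cases h : Q (k+1)
    · rwa [if_pos h]
    · rwa [if_neg h]

lemma usep {α : Type*} {a b : Ultrafilter α} (h : a ≠ b) : ∃ X, X ∈ a ∧ Xᶜ ∈ b := by
  by_contra hcon
  push_neg at hcon
  apply h
  apply Ultrafilter.coe_injective
  apply Filter.ext
  intro s
  simp only [Ultrafilter.mem_coe]
  constructor
  · intro hs
    exact Ultrafilter.compl_notMem_iff.mp (hcon s hs)
  · intro hs
    by_contra hna
    have h1 : sᶜ ∈ a := Ultrafilter.compl_mem_iff_notMem.mpr hna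
    have h2 := hcon sᶜ h1
    rw [compl_compl] at h2
    exact h2 hs

lemma sep (u : Ultrafilter (Finset ℕ))
    (hnc : ¬ NearlyCoherent (Ultrafilter.map fmin u) (Ultrafilter.map fmax u)) (G : ℕ → ℕ) :
    ∃ A ∈ u, ∀ v ∈ A, ∀ w ∈ A, fmax v < fmin w → G (fmax v) < fmin w := by
  classical
  set G' : ℕ → ℕ := fun x => (Finset.range (x+1)).sup G with hG'def
  have hG'mono : Monotone G' := fun a b hab =>
    Finset.sup_mono (Finset.range_subset_range.mpr (by omega))
  have hGle : ∀ x, G x ≤ G' x := fun x => Finset.le_sup (Finset.mem_range.mpr (Nat.lt_succ_self x))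
  let X : ℕ → ℕ := fun j => Nat.rec 0 (fun _ prev => G' prev + prev + 1) j
  have hXs : ∀ j, X (j+1) = G' (X j) + X j + 1 := fun j => rfl
  have hXlt : StrictMono X := strictMono_nat_of_lt_succ (fun j => by rw [hXs]; omega)
  have hXj : ∀ j, j ≤ X j := by
    intro j
    induction j with
    | zero => exact Nat.zero_le _
    | succ k ih => rw [hXs]; omega
  let π : ℕ → ℕ := fun x => @Nat.findGreatest (fun j => X j ≤ x) (fun j => Nat.decLe _ _) x
  have hπ1 : ∀ x, X (π x) ≤ x := fun x =>
    @findGreatest_spec0 (fun j => X j ≤ x) (fun j => Nat.decLe _ _) (Nat.zero_le x) x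
  have hπ2 : ∀ x, x < X (π x + 1) := by
    intro x
    by_cases hc : π x + 1 ≤ x
    · by_contra hcon
      push_neg at hcon
      exact @Nat.findGreatest_is_greatest (π x + 1) (fun j => X j ≤ x) (fun j => Nat.decLe _ _)
        x (Nat.lt_succ_self _) hc hcon
    · push_neg at hc
      calc x < π x + 1 := hc
        _ ≤ X (π x + 1) := hXj _
  have hπmono : Monotone π := fun a b hab =>
    @Nat.le_findGreatest (π a) (fun j => X j ≤ b) (fun j => Nat.decLe _ _) b
      (le_trans (@Nat.findGreatest_le (fun j => X j ≤ a) (fun j => Nat.decLe _ _) a) hab)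
      (le_trans (hπ1 a) hab)
  have hπft : FinToOne π := by
    intro n
    refine Set.Finite.subset (Set.finite_Iio (X (n+1))) ?_
    intro x hx
    simp only [Set.mem_preimage, Set.mem_singleton_iff] at hx
    have := hπ2 x
    rw [hx] at this
    exact this
  have hπ1ft : FinToOne (fun x => π x + 1) := by
    intro n
    refine Set.Finite.subset (Set.finite_Iio (X n)) ?_
    intro x hx
    simp only [Set.mem_preimage, Set.mem_singleton_iff] at hx
    have := hπ2 x
    rw [hx] at this
    exact this
  have hne1 : Ultrafilter.map π (Ultrafilter.map fmin u)
      ≠ Ultrafilter.map π (Ultrafilter.map fmax u) := fun he => hnc ⟨π, π, hπft, hπft, he⟩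
  have hne2 : Ultrafilter.map π (Ultrafilter.map fmin u)
      ≠ Ultrafilter.map (fun x => π x + 1) (Ultrafilter.map fmax u) :=
    fun he => hnc ⟨π, fun x => π x + 1, hπft, hπ1ft, he⟩
  obtain ⟨Xs, hXs1, hXs2⟩ := usep hne1
  obtain ⟨Ys, hYs1, hYs2⟩ := usep hne2
  have m1 : {v : Finset ℕ | π (fmin v) ∈ Xs} ∈ u :=
    Ultrafilter.mem_map.mp (Ultrafilter.mem_map.mp hXs1)
  have m2 : {v : Finset ℕ | π (fmin v) ∈ Ys} ∈ u :=
    Ultrafilter.mem_map.mp (Ultrafilter.mem_map.mp hYs1)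
  have m3 : {v : Finset ℕ | π (fmax v) ∉ Xs} ∈ u :=
    Ultrafilter.mem_map.mp (Ultrafilter.mem_map.mp hXs2)
  have m4 : {v : Finset ℕ | π (fmax v) + 1 ∉ Ys} ∈ u :=
    Ultrafilter.mem_map.mp (Ultrafilter.mem_map.mp hYs2)
  refine ⟨_, Filter.inter_mem (Filter.inter_mem m1 m2) (Filter.inter_mem m3 m4), ?_⟩
  rintro v ⟨⟨-, -⟩, hv3, hv4⟩ w ⟨⟨hw1, hw2⟩, -, -⟩ hlt
  have hmo : π (fmax v) ≤ π (fmin w) := hπmono hlt.le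
  have hne1' : π (fmin w) ≠ π (fmax v) := fun he => hv3 (he ▸ hw1)
  have hne2' : π (fmin w) ≠ π (fmax v) + 1 := fun he => hv4 (he ▸ hw2)
  have h2 : π (fmax v) + 2 ≤ π (fmin w) := by omega
  calc G (fmax v) ≤ G' (fmax v) := hGle _
    _ ≤ G' (X (π (fmax v) + 1)) := hG'mono (hπ2 _).le
    _ < X (π (fmax v) + 1 + 1) := by rw [hXs (π (fmax v) + 1)]; omega
    _ ≤ X (π (fmin w)) := hXlt.monotone (show π (fmax v) + 1 + 1 ≤ π (fmin w) by omega)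
    _ ≤ fmin w := hπ1 _

lemma delta (u : Ultrafilter (Finset ℕ)) (hu : IsUnionUltrafilter u) (hsm : StableViaMin u)
    (hpp : IsPPoint (Ultrafilter.map fmin u))
    (hnc : ¬ NearlyCoherent (Ultrafilter.map fmin u) (Ultrafilter.map fmax u))
    (B : Finset ℕ → Set (Finset ℕ)) (hB : ∀ v, B v ∈ u) :
    ∃ A ∈ u, (∀ x ∈ A, x.Nonempty) ∧ ∀ v ∈ A, ∀ w ∈ A, ordLT v w → w ∈ B v := by
  classical
  set C : ℕ → Set (Finset ℕ) :=
    fun m => {x : Finset ℕ | x.Nonempty} ∩ ⋂ v ∈ (Finset.range (m+1)).powerset, B v with hCdef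
  have hC : ∀ m, C m ∈ u := fun m =>
    Filter.inter_mem (uf_nonempty_mem hu) ((Filter.biInter_finset_mem _).mpr (fun v _ => hB v))
  set f : Finset ℕ → ℕ := fun v => sInf {m | m = fmin v ∨ v ∉ C m} with hfdef
  have hfP : ∀ v, f v = fmin v ∨ v ∉ C (f v) := fun v =>
    Nat.sInf_mem (s := {m | m = fmin v ∨ v ∉ C m}) ⟨fmin v, Or.inl rfl⟩
  have hfle : ∀ v, f v ≤ fmin v := fun v => Nat.sInf_le (Or.inl rfl)
  obtain ⟨h, hE⟩ := hsm f (fun n => n + 1)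
    ⟨Set.univ, Filter.univ_mem, fun v _ => Nat.lt_succ_of_le (hfle v)⟩
  obtain ⟨A₀, hA₀, hcases⟩ := hpp h
  have hA₀u : fmin ⁻¹' A₀ ∈ u := Ultrafilter.mem_map.mp hA₀
  rcases hcases with hconst | hfib
  · -- constant case: impossible
    exfalso
    obtain ⟨a₀, ha₀⟩ := Ultrafilter.nonempty_of_mem hA₀
    set c := h a₀ with hc
    have hW : ({v : Finset ℕ | f v = h (fmin v)} ∩ fmin ⁻¹' A₀
        ∩ {v : Finset ℕ | c < fmin v} ∩ C c) ∈ u :=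
      Filter.inter_mem (Filter.inter_mem (Filter.inter_mem hE hA₀u) (uf_fmin_gt_mem hu c)) (hC c)
    obtain ⟨v, ⟨⟨hv1, hv2⟩, hv3⟩, hv4⟩ := Ultrafilter.nonempty_of_mem hW
    have hfc : f v = c := by rw [hv1]; exact hconst (fmin v) hv2 a₀ ha₀
    rcases hfP v with h1 | h2
    · simp only [Set.mem_setOf_eq] at hv3; omega
    · rw [hfc] at h2; exact h2 hv4
  · -- finite-to-one case
    have hSfin : ∀ x : ℕ, {a | a ∈ A₀ ∧ h a ≤ x}.Finite := by
      intro x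
      refine Set.Finite.subset (Set.Finite.biUnion (Set.finite_Iic x) (fun n _ => hfib n)) ?_
      rintro a ⟨ha1, ha2⟩
      exact Set.mem_biUnion ha2 ⟨ha1, rfl⟩
    set G : ℕ → ℕ := fun x => sSup {a | a ∈ A₀ ∧ h a ≤ x} + 1 with hGdef
    have hG : ∀ x k, k ∈ A₀ → G x ≤ k → x < h k := by
      intro x k hk hGk
      by_contra hcon
      push_neg at hcon
      have h1 : k ≤ sSup {a | a ∈ A₀ ∧ h a ≤ x} := le_csSup (hSfin x).bddAbove ⟨hk, hcon⟩
      have h2 : G x = sSup {a | a ∈ A₀ ∧ h a ≤ x} + 1 := rfl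
      omega
    obtain ⟨A₁, hA₁u, hA₁⟩ := sep u hnc G
    refine ⟨{v : Finset ℕ | f v = h (fmin v)} ∩ fmin ⁻¹' A₀ ∩ A₁ ∩ C 0,
      Filter.inter_mem (Filter.inter_mem (Filter.inter_mem hE hA₀u) hA₁u) (hC 0), ?_, ?_⟩
    · rintro x ⟨-, hx⟩; exact hx.1
    · rintro v ⟨⟨⟨hvE, hvA₀⟩, hvA₁⟩, hvC⟩ w ⟨⟨⟨hwE, hwA₀⟩, hwA₁⟩, hwC⟩ hvw
      have hvne : v.Nonempty := hvC.1
      have hwne : w.Nonempty := hwC.1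
      have hbk : fmax v < fmin w := hvw (fmax v) (fmax_mem hvne) (fmin w) (fmin_mem hwne)
      have hGb : G (fmax v) < fmin w := hA₁ v hvA₁ w hwA₁ hbk
      have hwE' : f w = h (fmin w) := hwE
      have hfw : fmax v < f w := by
        rw [hwE']
        exact hG (fmax v) (fmin w) hwA₀ hGb.le
      have hwC' : w ∈ C (fmax v) := by
        by_contra hcon
        have hmem : fmax v ∈ {m | m = fmin w ∨ w ∉ C m} := Or.inr hcon
        have hle : f w ≤ fmax v := Nat.sInf_le hmem
        omega
      have hvsub : v ∈ (Finset.range (fmax v + 1)).powerset :=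
        Finset.mem_powerset.mpr (fun a ha => Finset.mem_range.mpr (Nat.lt_succ_of_le (le_fmax ha)))
      exact Set.mem_iInter₂.mp hwC'.2 v hvsub

lemma uf_fin_exists_color {α : Type*} {k : ℕ} (w : Ultrafilter α) (γ : α → Fin (k+1)) :
    ∃ i, {x | γ x = i} ∈ w := by
  by_contra hcon
  push_neg at hcon
  have h1 : (⋂ i, {x | γ x = i}ᶜ) ∈ w :=
    Filter.iInter_mem.mpr (fun i => Ultrafilter.compl_mem_iff_notMem.mpr (hcon i))
  obtain ⟨x, hx⟩ := Ultrafilter.nonempty_of_mem h1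
  exact (Set.mem_iInter.mp hx (γ x)) rfl

end Aux

/-- A union ultrafilter stable via min (whose min-image is a P-point, with min- and
max-images not nearly coherent) has the Ramsey property for pairs, hence is stable. -/
theorem stableViaMin_ramsey (u : Ultrafilter (Finset ℕ))
    (hu : IsUnionUltrafilter u) (hsm : StableViaMin u)
    (hpp : IsPPoint (Ultrafilter.map fmin u))
    (hnc : ¬ NearlyCoherent (Ultrafilter.map fmin u) (Ultrafilter.map fmax u)) :
    RamseyPairs u ∧ IsStable u := by
  constructor
  · -- Ramsey property for pairs
    intro n c
    have hcol : ∀ v : Finset ℕ, ∃ i : Fin (n+1), {w : Finset ℕ | c (v, w) = i} ∈ u :=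
      fun v => uf_fin_exists_color u (fun w => c (v, w))
    choose i hi using hcol
    obtain ⟨j, hj⟩ := uf_fin_exists_color u i
    obtain ⟨A, hAu, -, hA⟩ := delta u hu hsm hpp hnc (fun v => {w : Finset ℕ | c (v, w) = i v}) hi
    refine ⟨A ∩ {v | i v = j}, Filter.inter_mem hAu hj, j, ?_⟩
    intro v hv w hw hvw
    have h1 : c (v, w) = i v := hA v hv.1 w hw.1 hvw
    rw [h1]
    exact hv.2
  · -- stability
    intro s hs hFU
    obtain ⟨A, hAu, hAne, hA⟩ := delta u hu hsm hpp hnc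
      (fun v => ⋂ α ∈ Set.Iic (fmax v), FU (s α))
      (fun v => (Filter.biInter_mem (Set.finite_Iic _)).mpr (fun α _ => hFU α))
    obtain ⟨t, hts, htu, htsub⟩ := hu A hAu
    refine ⟨t, hts, htu, ?_⟩
    intro α
    obtain ⟨v₀, hv₀FU, hv₀min⟩ :=
      Ultrafilter.nonempty_of_mem (Filter.inter_mem htu (uf_fmin_gt_mem hu α))
    have hv₀ne : v₀.Nonempty := FU_nonempty hts hv₀FU
    simp only [Set.mem_setOf_eq] at hv₀min
    set N := fmax v₀ with hN
    have hIfin : {i : ℕ | ∃ b ∈ t i, b ≤ N}.Finite := by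
      have hsub : {i : ℕ | ∃ b ∈ t i, b ≤ N} ⊆ ⋃ b ∈ Set.Iic N, {i : ℕ | b ∈ t i} := by
        rintro i ⟨b, hb1, hb2⟩
        exact Set.mem_biUnion hb2 hb1
      refine Set.Finite.subset (Set.Finite.biUnion (Set.finite_Iic N) (fun b _ => ?_)) hsub
      apply Set.Subsingleton.finite
      intro i hi j hj
      by_contra hij
      exact (Finset.disjoint_left.mp (hts.2 hij) hi) hj
    set m := sSup {i : ℕ | ∃ b ∈ t i, b ≤ N} + 1 with hm
    have hmprop : ∀ i, m ≤ i → ∀ b ∈ t i, N < b := by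
      intro i hi b hb
      by_contra hcon
      push_neg at hcon
      have : i ≤ sSup {i : ℕ | ∃ b ∈ t i, b ≤ N} := le_csSup hIfin.bddAbove ⟨b, hb, hcon⟩
      omega
    refine ⟨m, ?_⟩
    rintro w ⟨v, hvne, rfl⟩
    have hwFU : v.biUnion (fun n => t (n + m)) ∈ FU t := by
      refine ⟨v.image (· + m), hvne.image _, ?_⟩
      ext a
      simp only [Finset.mem_biUnion, Finset.mem_image]
      constructor
      · rintro ⟨k, hk, ha⟩
        exact ⟨k + m, ⟨k, hk, rfl⟩, ha⟩
      · rintro ⟨b, ⟨k, hk, rfl⟩, ha⟩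
        exact ⟨k, hk, ha⟩
    have hwhigh : ∀ b ∈ v.biUnion (fun n => t (n + m)), N < b := by
      intro b hb
      obtain ⟨k, hk, hbk⟩ := Finset.mem_biUnion.mp hb
      exact hmprop (k + m) (by omega) b hbk
    have hord : ordLT v₀ (v.biUnion (fun n => t (n + m))) :=
      fun a ha b hb => lt_of_le_of_lt (le_fmax ha) (hwhigh b hb)
    have hmem := hA v₀ (htsub hv₀FU) _ (htsub hwFU) hord
    have hαle : α ≤ fmax v₀ := by
      have h1 : fmin v₀ ≤ fmax v₀ := le_fmax (fmin_mem hv₀ne)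
      omega
    exact Set.mem_iInter₂.mp hmem α hαle
end
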